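/- Spectral factorization of positive definite quadratic matrix polynomials: Let A(s) = A₀s² + (A₁+A₁*)s + A₂ be a quadratic polynomial of n×n complex matrices with A₀ positive definite, A₂ Hermitian, and A(s) invertible for every real s. Then there exists a unique n×n matrix Q with all eigenvalues in the open upper half-plane such that A(s) = (sI − Q*)A₀(sI − Q) for all complex s. -/

import Mathlib

/-!
Write `B = A₁ + A₁ᴴ`. The Stroh matrix `C = [[0, 1], [-A₀⁻¹A₂, -A₀⁻¹B]]` linearizes
`A(s) = A₀s² + Bs + A₂`: its eigenvectors are the `(x, μx)` with `A(μ)x = 0`, so it has no real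
eigenvalues. It is self-adjoint for the indefinite Hermitian form `G = [[B, A₀], [A₀, 0]]`, since
`GC = diag(-A₂, A₀)`; hence generalized eigenspaces of `C` for `λ`, `μ` with `conj λ ≠ μ` are
`G`-orthogonal, and the sums `M₊`, `M₋` of the generalized eigenspaces for the upper and lower
half-planes are `G`-neutral, `C`-invariant and span `ℂ²ⁿ`. For `u = (0, y)` in a neutral invariant
subspace, `0 = u* G C u = y* A₀ y`, so both `M₊` and `M₋` meet `0 × ℂⁿ` trivially. Counting
dimensions, `M₊` is the graph of a matrix `Q`, whose eigenvalues are eigenvalues of `C` on `M₊`.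
Invariance of the graph says `A₀Q² + BQ + A₂ = 0` and neutrality says `B = -(A₀Q + QᴴA₀)`,
which together are the factorization.

For uniqueness, two solutions `Q₁`, `Q₂` give `Q₁ᴴ D = D Q₂` with `D = A₀(Q₁ - Q₂)`; the spectra of
`Q₁ᴴ` and `Q₂` lie in opposite half-planes, so `D = 0` by Sylvester's theorem.
-/

open Matrix
open scoped ComplexOrder

open Polynomial in
theorem Polynomial.aeval_mul_eq_mul_aeval {R A : Type*} [CommSemiring R] [Semiring A]
    [Algebra R A] {x y d : A} (h : x * d = d * y) (p : R[X]) :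
    aeval x p * d = d * aeval y p := by
  induction p using Polynomial.induction_on' with
  | add p q hp hq => rw [map_add, map_add, add_mul, mul_add, hp, hq]
  | monomial k a =>
    have hk : SemiconjBy d y x := h.symm
    rw [aeval_monomial, aeval_monomial, mul_assoc, ← (hk.pow_right k).eq, ← mul_assoc,
      ← mul_assoc, Algebra.commutes]

open Polynomial in
theorem Matrix.eq_zero_of_mul_eq_mul_of_disjoint_spectrum {K n : Type*} [Field K]
    [IsAlgClosed K] [Fintype n] [DecidableEq n] {X Y D : Matrix n n K} (h : X * D = D * Y)
    (hXY : Disjoint (spectrum K X) (spectrum K Y)) : D = 0 := by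
  cases isEmpty_or_nonempty n
  · exact Subsingleton.elim _ _
  -- `χ_X(X) = 0`, while `χ_X(Y)` is invertible because `χ_X` has no roots in `σ(Y)`.
  have hunit : IsUnit (aeval Y X.charpoly) := by
    rw [← spectrum.zero_notMem_iff K, spectrum.map_polynomial_aeval_of_nonempty _ _
      (spectrum.nonempty_of_isAlgClosed_of_finiteDimensional K Y)]
    rintro ⟨μ, hμY, hμ⟩
    exact hXY.ne_of_mem (mem_spectrum_iff_isRoot_charpoly.2 hμ) hμY rfl
  have hp := aeval_mul_eq_mul_aeval h X.charpoly
  rwa [aeval_self_charpoly, zero_mul, eq_comm, hunit.mul_left_eq_zero] at hp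

namespace Module.End

variable {K V : Type*} [Field K] [AddCommGroup V] [Module K V]

open Polynomial in
theorem maxGenEigenspace_le_genEigenrange (f : End K V) {μ ν : K} (hνμ : ν ≠ μ) (k : ℕ) :
    f.maxGenEigenspace μ ≤ f.genEigenrange ν k := by
  intro v hv
  obtain ⟨N, hN⟩ := (mem_maxGenEigenspace f μ v).1 hv
  -- Bézout for the coprime polynomials `(X - ν)ᵏ` and `(X - μ)ᴺ`.
  obtain ⟨a, b, hab⟩ :=
    (isCoprime_X_sub_C_of_isUnit_sub (sub_ne_zero.2 hνμ).isUnit).pow (m := k) (n := N)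
  rw [mul_comm a] at hab
  have := LinearMap.congr_fun (congrArg (aeval f) hab) v
  simp only [map_add, map_mul, map_pow, map_sub, aeval_X, aeval_C, map_one,
    Algebra.algebraMap_eq_smul_one, LinearMap.add_apply, Module.End.mul_apply, hN, map_zero,
    add_zero, Module.End.one_apply] at this
  rw [genEigenrange_nat]
  exact ⟨aeval f a v, this⟩

def spectralSubspace (f : End K V) (S : Set K) : Submodule K V :=
  ⨆ μ ∈ S, f.maxGenEigenspace μ

theorem spectralSubspace_le_comap (f : End K V) (S : Set K) :
    f.spectralSubspace S ≤ (f.spectralSubspace S).comap f :=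
  iSup₂_le fun μ hμ _ hv ↦ le_iSup₂ (f := fun μ (_ : μ ∈ S) ↦ f.maxGenEigenspace μ) μ hμ
    (f.mapsTo_maxGenEigenspace_of_comm (Commute.refl f) μ hv)

theorem disjoint_maxGenEigenspace_spectralSubspace (f : End K V) {μ : K} {S : Set K}
    (hμ : μ ∉ S) : Disjoint (f.maxGenEigenspace μ) (f.spectralSubspace S) :=
  f.independent_maxGenEigenspace.disjoint_biSup hμ

theorem spectralSubspace_sup_eq_top [IsAlgClosed K] [FiniteDimensional K V] (f : End K V)
    {S T : Set K} (h : ∀ μ, f.HasEigenvalue μ → μ ∈ S ∪ T) :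
    f.spectralSubspace S ⊔ f.spectralSubspace T = ⊤ := by
  rw [eq_top_iff, ← f.iSup_maxGenEigenspace_eq_top]
  refine iSup_le fun μ ↦ ?_
  by_cases hμ : f.HasEigenvalue μ
  · rcases h μ hμ with hS | hT
    · exact (le_iSup₂ (f := fun μ (_ : μ ∈ S) ↦ f.maxGenEigenspace μ) μ hS).trans le_sup_left
    · exact (le_iSup₂ (f := fun μ (_ : μ ∈ T) ↦ f.maxGenEigenspace μ) μ hT).trans le_sup_right
  · have : f.maxGenEigenspace μ = ⊥ := not_not.1 fun h ↦ hμ (HasUnifEigenvalue.lt zero_lt_one h)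
    simp [this]

end Module.End

namespace Matrix

section SesquilinearForm

variable {K m : Type*} [Field K] [StarRing K] [Fintype m] [DecidableEq m]

theorem mul_sub_star_smul_one_pow {G C : Matrix m m K} (h : G * C = Cᴴ * G) (c : K) (k : ℕ) :
    G * (C - star c • 1) ^ k = ((C - c • 1) ^ k)ᴴ * G := by
  rw [conjTranspose_pow, conjTranspose_sub, conjTranspose_smul, conjTranspose_one]
  exact ((SemiconjBy.sub_right h ((Commute.one_right G).smul_right (star c))).pow_right k).eq

theorem star_dotProduct_mulVec_eq_zero_of_mem_maxGenEigenspace {G C : Matrix m m K}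
    (h : G * C = Cᴴ * G) {μ ν : K} (hμν : star μ ≠ ν) {u v : m → K}
    (hu : u ∈ Module.End.maxGenEigenspace (toLin' C) μ)
    (hv : v ∈ Module.End.maxGenEigenspace (toLin' C) ν) :
    star u ⬝ᵥ (G *ᵥ v) = 0 := by
  obtain ⟨k, hk⟩ : ∃ k : ℕ, ((toLinAlgEquiv' C - μ • 1) ^ k) u = 0 :=
    (Module.End.mem_maxGenEigenspace _ _ _).1 hu
  obtain ⟨w, rfl⟩ : v ∈ LinearMap.range ((toLinAlgEquiv' C - star μ • 1) ^ k) := by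
    rw [← Module.End.genEigenrange_nat]
    exact Module.End.maxGenEigenspace_le_genEigenrange _ hμν k hv
  simp only [← map_one (toLinAlgEquiv' (R := K) (n := m)), ← map_smul, ← map_sub, ← map_pow,
    toLinAlgEquiv'_apply] at hk ⊢
  rw [mulVec_mulVec, mul_sub_star_smul_one_pow h, ← mulVec_mulVec, dotProduct_mulVec,
    ← star_mulVec, hk, star_zero, zero_dotProduct]

theorem star_dotProduct_mulVec_eq_zero_of_mem_spectralSubspace {G C : Matrix m m K}
    (h : G * C = Cᴴ * G) {S T : Set K} (hST : ∀ μ ∈ S, ∀ ν ∈ T, star μ ≠ ν) {u v : m → K}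
    (hu : u ∈ Module.End.spectralSubspace (toLin' C) S)
    (hv : v ∈ Module.End.spectralSubspace (toLin' C) T) :
    star u ⬝ᵥ (G *ᵥ v) = 0 := by
  rw [Module.End.spectralSubspace, iSup_subtype'] at hu hv
  induction hu using Submodule.iSup_induction' with
  | mem μ u hu =>
    induction hv using Submodule.iSup_induction' with
    | mem ν v hv =>
      exact star_dotProduct_mulVec_eq_zero_of_mem_maxGenEigenspace h (hST μ μ.2 ν ν.2) hu hv
    | zero => simp
    | add v w _ _ hv hw => simp [mulVec_add, hv, hw]
  | zero => simp
  | add u w _ _ hu hw => simp [add_dotProduct, hu, hw]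

end SesquilinearForm

section Graph

variable {K m n : Type*} [Field K]

def graphMatrix [DecidableEq m] (Q : Matrix n m K) : Matrix (m ⊕ n) m K :=
  fromRows 1 Q

@[simp]
theorem graphMatrix_mulVec [Fintype m] [DecidableEq m] (Q : Matrix n m K) (x : m → K) :
    graphMatrix Q *ᵥ x = Sum.elim x (Q *ᵥ x) := by
  simp [graphMatrix, fromRows_mulVec]

theorem injective_funLeft_inl_comp_subtype {N : Submodule K (m ⊕ n → K)}
    (hN : ∀ u ∈ N, u ∘ Sum.inl = 0 → u = 0) :
    Function.Injective (LinearMap.funLeft K K Sum.inl ∘ₗ N.subtype) := by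
  rw [← LinearMap.ker_eq_bot, LinearMap.ker_eq_bot']
  exact fun u hu ↦ Subtype.ext (hN u u.2 hu)

theorem exists_graphMatrix_mulVec_mem [Fintype m] [DecidableEq m] [Fintype n]
    {N : Submodule K (m ⊕ n → K)} (hN : ∀ u ∈ N, u ∘ Sum.inl = 0 → u = 0)
    (hdim : Fintype.card m ≤ Module.finrank K N) :
    ∃ Q : Matrix n m K, ∀ x, graphMatrix Q *ᵥ x ∈ N := by
  have hπ := injective_funLeft_inl_comp_subtype hN
  have hrank : Module.finrank K N = Module.finrank K (m → K) :=
    le_antisymm (LinearMap.finrank_le_finrank_of_injective hπ) (by simpa using hdim)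
  let e := LinearEquiv.ofBijective _
    ⟨hπ, (LinearMap.injective_iff_surjective_of_finrank_eq_finrank hrank).1 hπ⟩
  refine ⟨LinearMap.toMatrix' (LinearMap.funLeft K K Sum.inr ∘ₗ N.subtype ∘ₗ e.symm.toLinearMap),
    fun x ↦ ?_⟩
  convert (e.symm x).2 using 1
  ext (i | i)
  · simp only [graphMatrix_mulVec, Sum.elim_inl]
    exact congrFun (e.apply_symm_apply x).symm i
  · simp

theorem card_le_finrank_of_sup_eq_top [Fintype m] {M M' : Submodule K (m ⊕ m → K)}
    (hM' : ∀ u ∈ M', u ∘ Sum.inl = 0 → u = 0) (hMM' : M ⊔ M' = ⊤) :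
    Fintype.card m ≤ Module.finrank K M := by
  have h₁ := LinearMap.finrank_le_finrank_of_injective (injective_funLeft_inl_comp_subtype hM')
  have h₂ := Submodule.finrank_add_le_finrank_add_finrank M M'
  rw [hMM', finrank_top] at h₂
  simp only [Module.finrank_fintype_fun_eq_card, Fintype.card_sum] at h₁ h₂
  omega

theorem spectrum_subset_of_mul_graphMatrix [Fintype m] [DecidableEq m]
    {C : Matrix (m ⊕ m) (m ⊕ m) K} {Q : Matrix m m K} {S : Set K}
    (hCQ : C * graphMatrix Q = graphMatrix Q * Q)
    (hQ : ∀ x, graphMatrix Q *ᵥ x ∈ Module.End.spectralSubspace (toLin' C) S) :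
    spectrum K Q ⊆ S := by
  intro μ hμ
  by_contra hμS
  rw [← spectrum_toLin', ← Module.End.hasEigenvalue_iff_mem_spectrum] at hμ
  obtain ⟨x, hx⟩ := hμ.exists_hasEigenvector
  have hmem : graphMatrix Q *ᵥ x ∈ Module.End.maxGenEigenspace (toLin' C) μ := by
    refine Module.End.eigenspace_le_maxGenEigenspace (Module.End.mem_eigenspace_iff.2 ?_)
    rw [toLin'_apply, mulVec_mulVec, hCQ, ← mulVec_mulVec, ← toLin'_apply Q, hx.apply_eq_smul,
      mulVec_smul]
  have h0 := Submodule.disjoint_def.1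
    (Module.End.disjoint_maxGenEigenspace_spectralSubspace _ hμS) _ hmem (hQ x)
  apply hx.2
  simpa using congrArg (· ∘ Sum.inl) h0

end Graph

section Stroh

variable {K ι : Type*} [Field K] [Fintype ι] [DecidableEq ι]

noncomputable def strohMatrix (A₀ B A₂ : Matrix ι ι K) : Matrix (ι ⊕ ι) (ι ⊕ ι) K :=
  fromBlocks 0 1 (-(A₀⁻¹ * A₂)) (-(A₀⁻¹ * B))

def strohForm (A₀ B : Matrix ι ι K) : Matrix (ι ⊕ ι) (ι ⊕ ι) K :=
  fromBlocks B A₀ A₀ 0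

theorem strohMatrix_mulVec (A₀ B A₂ : Matrix ι ι K) (x y : ι → K) :
    strohMatrix A₀ B A₂ *ᵥ Sum.elim x y = Sum.elim y (-(A₀⁻¹ *ᵥ (A₂ *ᵥ x + B *ᵥ y))) := by
  simp [strohMatrix, fromBlocks_mulVec, neg_mulVec, mulVec_add, mulVec_mulVec, add_comm]

theorem strohForm_mul_strohMatrix {A₀ : Matrix ι ι K} (hA₀ : IsUnit A₀.det)
    (B A₂ : Matrix ι ι K) : strohForm A₀ B * strohMatrix A₀ B A₂ = fromBlocks (-A₂) 0 0 A₀ := by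
  simp [strohForm, strohMatrix, fromBlocks_multiply, mul_nonsing_inv_cancel_left _ _ hA₀]

theorem strohForm_mul_strohMatrix_eq [StarRing K] {A₀ B A₂ : Matrix ι ι K}
    (hA₀ : A₀.IsHermitian) (hdet : IsUnit A₀.det) (hB : B.IsHermitian) (hA₂ : A₂.IsHermitian) :
    strohForm A₀ B * strohMatrix A₀ B A₂ = (strohMatrix A₀ B A₂)ᴴ * strohForm A₀ B := by
  have hG : (strohForm A₀ B)ᴴ = strohForm A₀ B := by
    simp [strohForm, fromBlocks_conjTranspose, hA₀.eq, hB.eq]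
  rw [← hG, ← conjTranspose_mul, hG, strohForm_mul_strohMatrix hdet]
  simp [fromBlocks_conjTranspose, hA₀.eq, hA₂.eq]

theorem not_hasEigenvalue_strohMatrix {A₀ : Matrix ι ι K} (hA₀ : IsUnit A₀.det)
    (B A₂ : Matrix ι ι K) {μ : K} (hμ : IsUnit (μ ^ 2 • A₀ + μ • B + A₂).det) :
    ¬ Module.End.HasEigenvalue (toLin' (strohMatrix A₀ B A₂)) μ := by
  intro h
  obtain ⟨u, hu⟩ := h.exists_hasEigenvector
  have hu' := hu.apply_eq_smul
  rw [← Sum.elim_comp_inl_inr u, toLin'_apply, strohMatrix_mulVec] at hu'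
  have hy : u ∘ Sum.inr = μ • u ∘ Sum.inl := funext fun i ↦ by simpa using congrFun hu' (.inl i)
  have hx : -(A₀⁻¹ *ᵥ (A₂ *ᵥ u ∘ Sum.inl + B *ᵥ u ∘ Sum.inr)) = μ • u ∘ Sum.inr :=
    funext fun i ↦ by simpa using congrFun hu' (.inr i)
  have hx0 : u ∘ Sum.inl = 0 := by
    refine (mulVec_injective_iff_isUnit.2 ((isUnit_iff_isUnit_det _).2 hμ)) ?_
    have := congrArg (A₀ *ᵥ ·) hx
    simp only [hy, mulVec_neg, mulVec_add, mulVec_smul, mulVec_mulVec,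
      mul_nonsing_inv_cancel_left _ _ hA₀] at this
    rw [mulVec_zero, add_mulVec, add_mulVec, smul_mulVec, smul_mulVec]
    linear_combination (norm := module) -this
  apply hu.2
  rw [← Sum.elim_comp_inl_inr u, hy, hx0]
  simp

theorem strohMatrix_mul_graphMatrix_eq {A₀ B A₂ Q : Matrix ι ι K} {N : Submodule K (ι ⊕ ι → K)}
    (hN : ∀ u ∈ N, u ∘ Sum.inl = 0 → u = 0) (hNC : N ≤ N.comap (toLin' (strohMatrix A₀ B A₂)))
    (hQ : ∀ x, graphMatrix Q *ᵥ x ∈ N) :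
    strohMatrix A₀ B A₂ * graphMatrix Q = graphMatrix Q * Q := by
  rw [ext_iff_mulVec]
  intro x
  rw [← sub_eq_zero, ← sub_mulVec]
  refine hN _ ?_ ?_
  · rw [sub_mulVec, ← mulVec_mulVec, ← mulVec_mulVec]
    exact N.sub_mem (hNC (hQ x)) (hQ _)
  · funext i
    simp [strohMatrix, graphMatrix, fromBlocks_mul_fromRows, fromRows_mul, sub_mulVec]

theorem strohMatrix_mul_graphMatrix_eq_iff {A₀ : Matrix ι ι K} (hA₀ : IsUnit A₀.det)
    (B A₂ Q : Matrix ι ι K) :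
    strohMatrix A₀ B A₂ * graphMatrix Q = graphMatrix Q * Q ↔ A₀ * Q * Q + B * Q + A₂ = 0 := by
  have hsolvent_eq :
      A₀ * Q * Q + B * Q + A₂ = A₀ * (Q * Q - (-(A₀⁻¹ * A₂) + -(A₀⁻¹ * B * Q))) := by
    simp only [mul_sub, mul_add, mul_neg, ← Matrix.mul_assoc, mul_nonsing_inv _ hA₀, one_mul]
    abel
  rw [hsolvent_eq, ((isUnit_iff_isUnit_det A₀).2 hA₀).mul_right_eq_zero, sub_eq_zero,
    strohMatrix, graphMatrix, fromBlocks_mul_fromRows, fromRows_mul, fromRows_ext_iff]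
  simp only [mul_one, one_mul, zero_add, neg_mul, true_and, eq_comm]

theorem eq_zero_of_star_dotProduct_strohForm_mulVec {A₀ : Matrix ι ι ℂ} (hA₀ : A₀.PosDef)
    (B A₂ : Matrix ι ι ℂ) {u : ι ⊕ ι → ℂ}
    (hu : star u ⬝ᵥ (strohForm A₀ B *ᵥ (strohMatrix A₀ B A₂ *ᵥ u)) = 0)
    (hu₀ : u ∘ Sum.inl = 0) : u = 0 := by
  rw [mulVec_mulVec, strohForm_mul_strohMatrix ((isUnit_iff_isUnit_det A₀).1 hA₀.isUnit),
    ← Sum.elim_comp_inl_inr u, hu₀, fromBlocks_mulVec] at hu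
  simp only [Function.star_sumElim, star_zero, Sum.elim_comp_inl, mulVec_zero, Sum.elim_comp_inr,
    zero_mulVec, add_zero, zero_add, sumElim_dotProduct_sumElim, dotProduct_zero] at hu
  have hy : u ∘ Sum.inr = 0 := by
    by_contra hy
    exact (hA₀.dotProduct_mulVec_pos hy).ne' hu
  rw [← Sum.elim_comp_inl_inr u, hu₀, hy, Sum.elim_zero_zero]

theorem add_mul_add_conjTranspose_mul_eq_zero {A₀ B Q : Matrix ι ι ℂ}
    {N : Submodule ℂ (ι ⊕ ι → ℂ)} (hNG : ∀ u ∈ N, ∀ v ∈ N, star u ⬝ᵥ (strohForm A₀ B *ᵥ v) = 0)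
    (hQ : ∀ x, graphMatrix Q *ᵥ x ∈ N) :
    B + A₀ * Q + Qᴴ * A₀ = 0 := by
  have hL : (graphMatrix Q)ᴴ * strohForm A₀ B * graphMatrix Q = B + A₀ * Q + Qᴴ * A₀ := by
    simp [strohForm, graphMatrix, conjTranspose_fromRows_eq_fromCols_conjTranspose,
      fromBlocks_mul_fromRows, Matrix.mul_assoc, fromCols_mul_fromRows, add_assoc]
  rw [← hL, ext_iff_mulVec]
  intro y
  rw [zero_mulVec, ← dotProduct_star_self_eq_zero, ← mulVec_mulVec, ← mulVec_mulVec,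
    dotProduct_mulVec, ← star_mulVec]
  exact hNG _ (hQ _) _ (hQ y)

theorem spectralSubspace_strohMatrix_sup_eq_top {A₀ B A₂ : Matrix ι ι ℂ} (hA₀ : IsUnit A₀.det)
    (hreg : ∀ t : ℝ, IsUnit ((t : ℂ) ^ 2 • A₀ + (t : ℂ) • B + A₂).det) :
    Module.End.spectralSubspace (toLin' (strohMatrix A₀ B A₂)) {μ | 0 < μ.im} ⊔
      Module.End.spectralSubspace (toLin' (strohMatrix A₀ B A₂)) {μ | μ.im < 0} = ⊤ := by
  refine Module.End.spectralSubspace_sup_eq_top _ fun μ hμ ↦ ?_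
  rcases lt_trichotomy μ.im 0 with h | h | h
  · exact Or.inr h
  · refine absurd hμ (not_hasEigenvalue_strohMatrix hA₀ B A₂ ?_)
    rw [← Complex.re_add_im μ, h, Complex.ofReal_zero, zero_mul, add_zero]
    exact hreg μ.re
  · exact Or.inl h

end Stroh

theorem quadratic_eq_factor_iff {R ι : Type*} [CommRing R] [Star R] [Fintype ι]
    [DecidableEq ι] {A₀ B A₂ Q : Matrix ι ι R} :
    (∀ s : R, s ^ 2 • A₀ + s • B + A₂ = (s • 1 - Qᴴ) * A₀ * (s • 1 - Q)) ↔
      B = -(A₀ * Q + Qᴴ * A₀) ∧ A₂ = Qᴴ * A₀ * Q := by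
  have expand (s : R) : (s • 1 - Qᴴ) * A₀ * (s • 1 - Q) =
      s ^ 2 • A₀ + s • -(A₀ * Q + Qᴴ * A₀) + Qᴴ * A₀ * Q := by
    simp only [sub_mul, mul_sub, smul_mul_assoc, mul_smul_comm, one_mul, mul_one, smul_sub,
      smul_neg, smul_add, smul_smul, pow_two]
    abel
  simp_rw [expand]
  refine ⟨fun h ↦ ?_, fun ⟨hB, hA₂⟩ s ↦ by rw [hB, hA₂]⟩
  have h₀ := h 0
  have h₁ := h 1
  simp only [ne_eq, OfNat.ofNat_ne_zero, not_false_eq_true, zero_pow, zero_smul, zero_add,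
    one_pow, one_smul] at h₀ h₁
  rw [h₀] at h₁
  exact ⟨add_left_cancel (add_right_cancel h₁), h₀⟩

variable {ι : Type*} [Fintype ι] [DecidableEq ι]

theorem exists_spectralFactor {A₀ B A₂ : Matrix ι ι ℂ} (hA₀ : A₀.PosDef) (hB : B.IsHermitian)
    (hA₂ : A₂.IsHermitian) (hreg : ∀ t : ℝ, IsUnit ((t : ℂ) ^ 2 • A₀ + (t : ℂ) • B + A₂).det) :
    ∃ Q : Matrix ι ι ℂ, spectrum ℂ Q ⊆ {μ | 0 < μ.im} ∧
      B = -(A₀ * Q + Qᴴ * A₀) ∧ A₂ = Qᴴ * A₀ * Q := by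
  have hdet : IsUnit A₀.det := (isUnit_iff_isUnit_det A₀).1 hA₀.isUnit
  set C := strohMatrix A₀ B A₂
  have hGC := strohForm_mul_strohMatrix_eq hA₀.isHermitian hdet hB hA₂
  have hneutral {S : Set ℂ} (hS : ∀ μ ∈ S, ∀ ν ∈ S, star μ ≠ ν) :
      ∀ u ∈ Module.End.spectralSubspace (toLin' C) S,
        ∀ v ∈ Module.End.spectralSubspace (toLin' C) S, star u ⬝ᵥ (strohForm A₀ B *ᵥ v) = 0 :=
    fun _ hu _ hv ↦ star_dotProduct_mulVec_eq_zero_of_mem_spectralSubspace hGC hS hu hv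
  have htransversal {S : Set ℂ} (hS : ∀ μ ∈ S, ∀ ν ∈ S, star μ ≠ ν) :
      ∀ u ∈ Module.End.spectralSubspace (toLin' C) S, u ∘ Sum.inl = 0 → u = 0 :=
    fun u hu ↦ eq_zero_of_star_dotProduct_strohForm_mulVec hA₀ B A₂
      (hneutral hS u hu _ (Module.End.spectralSubspace_le_comap _ _ hu))
  have hupper : ∀ μ ∈ {μ : ℂ | 0 < μ.im}, ∀ ν ∈ {μ : ℂ | 0 < μ.im}, star μ ≠ ν := by
    intro μ (hμ : 0 < μ.im) ν (hν : 0 < ν.im) h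
    rw [← h, Complex.star_def, Complex.conj_im] at hν
    linarith
  have hlower : ∀ μ ∈ {μ : ℂ | μ.im < 0}, ∀ ν ∈ {μ : ℂ | μ.im < 0}, star μ ≠ ν := by
    intro μ (hμ : μ.im < 0) ν (hν : ν.im < 0) h
    rw [← h, Complex.star_def, Complex.conj_im] at hν
    linarith
  obtain ⟨Q, hQ⟩ := exists_graphMatrix_mulVec_mem (htransversal hupper)
    (card_le_finrank_of_sup_eq_top (htransversal hlower)
      (spectralSubspace_strohMatrix_sup_eq_top hdet hreg))
  have hCQ := strohMatrix_mul_graphMatrix_eq (htransversal hupper)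
    (Module.End.spectralSubspace_le_comap _ _) hQ
  have hsolvent := (strohMatrix_mul_graphMatrix_eq_iff hdet B A₂ Q).1 hCQ
  have hB' : B = -(A₀ * Q + Qᴴ * A₀) := by
    have hlin := add_mul_add_conjTranspose_mul_eq_zero (hneutral hupper) hQ
    rw [add_assoc] at hlin
    exact eq_neg_of_add_eq_zero_left hlin
  refine ⟨Q, spectrum_subset_of_mul_graphMatrix hCQ hQ, hB', ?_⟩
  calc A₂ = -(A₀ * Q * Q + B * Q) := eq_neg_of_add_eq_zero_right hsolvent
    _ = Qᴴ * A₀ * Q := by rw [hB']; noncomm_ring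

theorem eq_of_spectrum_subset_upperHalfPlane {A₀ Q₁ Q₂ : Matrix ι ι ℂ} (hA₀ : IsUnit A₀)
    (h₁ : spectrum ℂ Q₁ ⊆ {μ | 0 < μ.im}) (h₂ : spectrum ℂ Q₂ ⊆ {μ | 0 < μ.im})
    (hlin : A₀ * Q₁ + Q₁ᴴ * A₀ = A₀ * Q₂ + Q₂ᴴ * A₀) (hquad : Q₁ᴴ * A₀ * Q₁ = Q₂ᴴ * A₀ * Q₂) :
    Q₁ = Q₂ := by
  have hD : A₀ * (Q₁ - Q₂) = Q₂ᴴ * A₀ - Q₁ᴴ * A₀ := by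
    rw [mul_sub, sub_eq_sub_iff_add_eq_add, hlin, add_comm]
  have hsylvester : Q₁ᴴ * (A₀ * (Q₁ - Q₂)) = A₀ * (Q₁ - Q₂) * Q₂ :=
    calc Q₁ᴴ * (A₀ * (Q₁ - Q₂)) = Q₁ᴴ * A₀ * Q₁ - Q₁ᴴ * A₀ * Q₂ := by noncomm_ring
      _ = A₀ * (Q₁ - Q₂) * Q₂ := by rw [hquad, hD]; noncomm_ring
  have hdisj : Disjoint (spectrum ℂ Q₁ᴴ) (spectrum ℂ Q₂) := by
    rw [← star_eq_conjTranspose, spectrum.map_star, Set.disjoint_left]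
    intro μ hμ₁ hμ₂
    have hμ₁' : 0 < (star μ).im := h₁ (Set.mem_star.1 hμ₁)
    have hμ₂' : 0 < μ.im := h₂ hμ₂
    rw [Complex.star_def, Complex.conj_im] at hμ₁'
    linarith
  have := eq_zero_of_mul_eq_mul_of_disjoint_spectrum hsylvester hdisj
  rwa [hA₀.mul_right_eq_zero, sub_eq_zero] at this

end Matrix

/-- Spectral factorization of positive definite quadratic matrix polynomials:
if `A₀` is positive definite, `A₂` Hermitian, and `A(s)` is invertible for
every real `s`, then there is a unique matrix `Q` with all eigenvalues in the
open upper half-plane such that `A(s) = (sI − Qᴴ) A₀ (sI − Q)` for all `s`. -/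
theorem stmt17 {n : ℕ} (A₀ A₁ A₂ : Matrix (Fin n) (Fin n) ℂ)
    (hA₀ : A₀.PosDef) (hA₂ : A₂.IsHermitian)
    (A : ℂ → Matrix (Fin n) (Fin n) ℂ)
    (hA : ∀ s : ℂ, A s = s ^ 2 • A₀ + s • (A₁ + A₁ᴴ) + A₂)
    (hreg : ∀ t : ℝ, IsUnit (A (t : ℂ)).det) :
    ∃! Q : Matrix (Fin n) (Fin n) ℂ,
      (∀ μ ∈ spectrum ℂ Q, 0 < μ.im) ∧
        ∀ s : ℂ, A s = (s • 1 - Qᴴ) * A₀ * (s • 1 - Q) := by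
  have hfactor (Q : Matrix (Fin n) (Fin n) ℂ) :
      (∀ s : ℂ, A s = (s • 1 - Qᴴ) * A₀ * (s • 1 - Q)) ↔
        A₁ + A₁ᴴ = -(A₀ * Q + Qᴴ * A₀) ∧ A₂ = Qᴴ * A₀ * Q := by
    simp_rw [hA]
    exact quadratic_eq_factor_iff
  obtain ⟨Q, hQ, hcoeff⟩ := exists_spectralFactor hA₀ (isHermitian_add_transpose_self A₁) hA₂
    fun t ↦ hA t ▸ hreg t
  refine ⟨Q, ⟨hQ, (hfactor Q).2 hcoeff⟩, fun Q' ⟨hQ', hQ'factor⟩ ↦ ?_⟩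
  obtain ⟨hB', hA₂'⟩ := (hfactor Q').1 hQ'factor
  exact eq_of_spectrum_subset_upperHalfPlane hA₀.isUnit hQ' hQ
    (neg_inj.1 (hB'.symm.trans hcoeff.1)) (hA₂'.symm.trans hcoeff.2)
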